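/- arXiv:2110.12743 — 5 statements merged into one kernel-verified Lean document; each statement's English description precedes it below -/
import Mathlib

section
/- Let T_1, ..., T_n be finite multisets of vectors in Z^d with all entries nonnegative and bounded by Δ in absolute value. If the total sums of the elements of each multiset are all equal, i.e. Σ_{τ∈T_1} τ = ... = Σ_{τ∈T_n} τ, and this common sum is nonzero, then there exist nonempty submultisets S_i ⊆ T_i such that Σ_{s∈S_1} s = ... = Σ_{s∈S_n} s, and moreover the cardinality of each S_i can be bounded by a function of d and Δ alone (independent of n and of the sizes of the T_i). -/
/-!
Identify a multiset of tiles with its vector of multiplicities, and say that a value `σ` forces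
`v` if every multiset of tiles with sum `σ` contains one with sum `v`. Upper sets of `ℕ^k` are
well-quasi-ordered under reverse inclusion: the complement of an upper set is a finite union of
boxes with corners in `(ℕ ∪ {∞})^k`, and finite sets of corners are well-quasi-ordered by Higman's
lemma. Applied to the upper closures of the fibres of the sum map, this leaves only finitely many
*terminal* values, which force no nonzero value but themselves. From the common sum, pass to a
forced nonzero value as long as the current one is not terminal; the multisets shrink, so this
stops at a terminal value, and its finitely many decompositions have bounded size.
-/

open Set

theorem UpperSet.exists_finite_eq_upperClosure {α : Type*} [PartialOrder α]
    [WellQuasiOrderedLE α] (U : UpperSet α) : ∃ s : Set α, s.Finite ∧ upperClosure s = U := by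
  refine ⟨{x | Minimal (· ∈ U) x},
    WellQuasiOrderedLE.finite_of_isAntichain (setOfPred_minimal_antichain _), ?_⟩
  ext x
  rw [SetLike.mem_coe, SetLike.mem_coe, mem_upperClosure]
  constructor
  · rintro ⟨a, ha, hax⟩
    exact U.upper hax ha.prop
  · intro hx
    obtain ⟨a, hax, ha⟩ := exists_minimal_le_of_wellFoundedLT _ x hx
    exact ⟨a, ha, hax⟩

theorem Set.Finite.exists_finite_boxes_compl_upperClosure {ι : Type*} [Finite ι]
    {s : Set (ι → ℕ)} (hs : s.Finite) :
    ∃ C : Set (ι → ℕ∞), C.Finite ∧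
      ∀ x : ι → ℕ, x ∉ upperClosure s ↔ ∃ c ∈ C, (fun i => (x i : ℕ∞)) ≤ c := by
  obtain ⟨b, hb⟩ := hs.bddAbove
  -- Coordinates beyond the bound `b` are irrelevant for membership in `upperClosure s`.
  set clamp : (ι → ℕ) → ι → ℕ∞ := fun x i => if b i ≤ x i then ⊤ else x i
  have le_clamp (x : ι → ℕ) : (fun i => (x i : ℕ∞)) ≤ clamp x := by
    intro i
    by_cases h : b i ≤ x i <;> simp [clamp, h]
  refine ⟨clamp '' (upperClosure s : Set (ι → ℕ))ᶜ, ?_,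
    fun x => ⟨fun hx => ⟨_, ⟨x, hx, rfl⟩, le_clamp x⟩, ?_⟩⟩
  · refine (Set.Finite.pi fun i => ((finite_Iio (b i)).image ((↑) : ℕ → ℕ∞)).insert ⊤).subset ?_
    rintro _ ⟨x, -, rfl⟩ i -
    by_cases h : b i ≤ x i
    · simp [clamp, h]
    · exact Or.inr ⟨x i, by simpa using h, by simp [clamp, h]⟩
  · rintro ⟨_, ⟨y, hy, rfl⟩, hxy⟩ ⟨g, hg, hgx⟩
    refine hy ⟨g, hg, fun i => ?_⟩
    by_cases h : b i ≤ y i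
    · exact (hb hg i).trans h
    · have := hxy i
      simp only [clamp, h, if_false, Nat.cast_le] at this
      exact (hgx i).trans this

theorem List.SublistForall₂.exists_of_mem {α β : Type*} {R : α → β → Prop} {l₁ : List α}
    {l₂ : List β} (h : List.SublistForall₂ R l₁ l₂) : ∀ a ∈ l₁, ∃ b ∈ l₂, R a b := by
  induction h with
  | nil => simp
  | cons hab _ ih =>
    rintro a (_ | ⟨_, ha⟩)
    · exact ⟨_, List.mem_cons_self, hab⟩
    · obtain ⟨b, hb, hab⟩ := ih a ha
      exact ⟨b, List.mem_cons_of_mem _ hb, hab⟩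
  | cons_right _ ih =>
    intro a ha
    obtain ⟨b, hb, hab⟩ := ih a ha
    exact ⟨b, List.mem_cons_of_mem _ hb, hab⟩

theorem exists_lt_forall_exists_le_of_finite {β : Type*} [Preorder β] [WellQuasiOrderedLE β]
    (C : ℕ → Set β) (hC : ∀ n, (C n).Finite) :
    ∃ m n, m < n ∧ ∀ c ∈ C m, ∃ c' ∈ C n, c ≤ c' := by
  obtain ⟨m, n, hmn, h⟩ := PartiallyWellOrderedOn.partiallyWellOrderedOn_sublistForall₂ (· ≤ ·)
    (isPWO_of_wellQuasiOrderedLE univ) fun n => ⟨(hC n).toFinset.toList, fun _ _ => mem_univ _⟩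
  refine ⟨m, n, hmn, fun c hc => ?_⟩
  obtain ⟨c', hc', hcc'⟩ := h.exists_of_mem c (by simpa using hc)
  exact ⟨c', by simpa using hc', hcc'⟩

instance UpperSet.wellQuasiOrderedLE_pi_nat {ι : Type*} [Finite ι] :
    WellQuasiOrderedLE (UpperSet (ι → ℕ)) := by
  refine ⟨fun U => ?_⟩
  choose s hs hsU using fun n => (U n).exists_finite_eq_upperClosure
  choose C hC hCs using fun n => (hs n).exists_finite_boxes_compl_upperClosure
  obtain ⟨m, n, hmn, h⟩ := exists_lt_forall_exists_le_of_finite C hC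
  refine ⟨m, n, hmn, ?_⟩
  simp only [← hsU]
  refine UpperSet.coe_subset_coe.1 fun x hx => ?_
  by_contra hxm
  obtain ⟨c, hc, hxc⟩ := (hCs m x).1 hxm
  obtain ⟨c', hc', hcc'⟩ := h c hc
  exact (hCs n x).2 ⟨c', hc', hxc.trans hcc'⟩ hx

instance UpperSet.wellQuasiOrderedLE_multiset {ι : Type*} [Finite ι] :
    WellQuasiOrderedLE (UpperSet (Multiset ι)) := by
  classical
  exact (UpperSet.map (Finsupp.orderIsoMultiset.symm.trans
    Finsupp.orderIsoFunOnFinite)).wellQuasiOrderedLE_iff.2 inferInstance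

section Forcing

variable {A M : Type*} [PartialOrder A] (wt : A → M)

def Forces (σ v : M) : Prop := wt ⁻¹' {σ} ⊆ upperClosure (wt ⁻¹' {v})

variable {wt} in
theorem Forces.trans {σ v u : M} (h₁ : Forces wt σ v) (h₂ : Forces wt v u) : Forces wt σ u :=
  Set.Subset.trans h₁ (upperClosure_min h₂ (upperClosure _).upper)

variable [Zero M]

def terminalValues : Set M := {σ | ∀ v, Forces wt σ v → v = σ ∨ v = 0}

theorem finite_terminalValues [WellQuasiOrderedLE (UpperSet A)] : (terminalValues wt).Finite := by
  by_contra hinf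
  let e := (Set.Infinite.sdiff hinf (finite_singleton 0)).natEmbedding
  obtain ⟨m, n, hmn, hle⟩ := wellQuasiOrdered_le fun k => upperClosure (wt ⁻¹' {(e k : M)})
  have hforces : Forces wt (e n) (e m) :=
    subset_upperClosure.trans (UpperSet.coe_subset_coe.2 hle)
  rcases (e n).2.1 _ hforces with h | h
  · exact hmn.ne (e.injective (Subtype.ext h))
  · exact (e m).2.2 h

theorem exists_forces_mem_terminalValues [WellFoundedLT A] (x : A) (hx : wt x ≠ 0) :
    ∃ v ∈ terminalValues wt, v ≠ 0 ∧ Forces wt (wt x) v := by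
  induction x using WellFoundedLT.induction with
  | _ x ih =>
    by_cases hterm : wt x ∈ terminalValues wt
    · exact ⟨wt x, hterm, hx, subset_upperClosure⟩
    simp only [terminalValues, mem_ofPred_eq, not_forall, not_or] at hterm
    obtain ⟨v, hforces, hvx, hv0⟩ := hterm
    obtain ⟨y, rfl, hyx⟩ := mem_upperClosure.1 (hforces rfl)
    have hyx' : y < x := lt_of_le_of_ne hyx (by rintro rfl; exact hvx rfl)
    obtain ⟨u, hu, hu0, hforces'⟩ := ih y hyx' hv0
    exact ⟨u, hu, hu0, hforces.trans hforces'⟩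

end Forcing

theorem Multiset.exists_bound_forced_subsum {ι M : Type*} [Finite ι] [AddCommMonoid M]
    (w : ι → M) (hfin : ∀ v, {S : Multiset ι | (S.map w).sum = v}.Finite) :
    ∃ N : ℕ, ∀ T₀ : Multiset ι, (T₀.map w).sum ≠ 0 → ∃ v ≠ 0, ∀ T : Multiset ι,
      (T.map w).sum = (T₀.map w).sum → ∃ S ≤ T, (S.map w).sum = v ∧ card S ≤ N := by
  set wt : Multiset ι → M := fun S => (S.map w).sum
  have hF : (wt ⁻¹' terminalValues wt).Finite :=
    (finite_terminalValues wt).preimage' fun v _ => hfin v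
  obtain ⟨N, hN⟩ := (hF.image card).bddAbove
  refine ⟨N, fun T₀ hT₀ => ?_⟩
  obtain ⟨v, hv, hv0, hforces⟩ := exists_forces_mem_terminalValues wt T₀ hT₀
  refine ⟨v, hv0, fun T hT => ?_⟩
  obtain ⟨S, hS, hST⟩ := mem_upperClosure.1 (hforces hT)
  exact ⟨S, hST, hS, hN ⟨S, show wt S ∈ terminalValues wt by rwa [show wt S = v from hS], rfl⟩⟩

theorem Multiset.card_le_sum_sum_map {ι κ : Type*} [Fintype κ] (w : ι → κ → ℤ)
    (hw : ∀ i, 0 ≤ w i ∧ w i ≠ 0) (S : Multiset ι) : (card S : ℤ) ≤ ∑ j, (S.map w).sum j := by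
  have hpos (i : ι) : 1 ≤ ∑ j, w i j := by
    obtain ⟨j, hj⟩ := Function.ne_iff.1 (hw i).2
    calc 1 ≤ w i j := by have := (hw i).1 j; simp only [Pi.zero_apply] at hj this; omega
      _ ≤ ∑ j, w i j := Finset.single_le_sum (fun j _ => (hw i).1 j) (Finset.mem_univ j)
  have hsum : ∑ j, (S.map w).sum j = (S.map fun i => ∑ j, w i j).sum := by
    induction S using Multiset.induction_on with
    | empty => simp
    | cons a S ih => simp [Finset.sum_add_distrib, ih]
  rw [hsum]
  simpa using Multiset.card_nsmul_le_sum (s := S.map fun i => ∑ j, w i j) (a := 1)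
    (by simpa using fun i _ => hpos i)

theorem Multiset.finite_setOf_sum_map_eq {ι κ : Type*} [Finite ι] [Fintype κ] (w : ι → κ → ℤ)
    (hw : ∀ i, 0 ≤ w i ∧ w i ≠ 0) (v : κ → ℤ) : {S : Multiset ι | (S.map w).sum = v}.Finite := by
  classical
  cases nonempty_fintype ι
  refine (Set.finite_Iic ((∑ j, v j).toNat • Finset.univ.val)).subset fun S hS => ?_
  have hcard := card_le_sum_sum_map w hw S
  rw [show (S.map w).sum = v from hS] at hcard
  refine Multiset.le_iff_count.2 fun a => ?_
  rw [Multiset.count_nsmul, Multiset.count_univ, mul_one]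
  have := Multiset.count_le_card a S
  omega

theorem Multiset.sum_filter_ne_zero {M : Type*} [AddCommMonoid M] [DecidableEq M]
    (s : Multiset M) : (s.filter (· ≠ 0)).sum = s.sum := by
  induction s using Multiset.induction_on with
  | empty => simp
  | cons a s ih => by_cases h : a = 0 <;> simp [h, ih]

theorem exists_bound_common_subsum {κ : Type*} [Fintype κ] {P : Set (κ → ℤ)} (hP : P.Finite)
    (hP0 : ∀ τ ∈ P, 0 ≤ τ ∧ τ ≠ 0) :
    ∃ N : ℕ, ∀ T₀ : Multiset (κ → ℤ), (∀ τ ∈ T₀, τ ∈ P) → T₀.sum ≠ 0 → ∃ v ≠ 0,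
      ∀ T : Multiset (κ → ℤ), (∀ τ ∈ T, τ ∈ P) → T.sum = T₀.sum →
        ∃ S ≤ T, S.sum = v ∧ Multiset.card S ≤ N := by
  have : Finite P := hP.to_subtype
  obtain ⟨N, hN⟩ := Multiset.exists_bound_forced_subsum ((↑) : P → κ → ℤ)
    (Multiset.finite_setOf_sum_map_eq _ fun τ => hP0 τ τ.2)
  refine ⟨N, fun T₀ hT₀ hT₀0 => ?_⟩
  lift T₀ to Multiset P using hT₀
  obtain ⟨v, hv0, hv⟩ := hN T₀ hT₀0
  refine ⟨v, hv0, fun T hT hTT₀ => ?_⟩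
  lift T to Multiset P using hT
  obtain ⟨S, hST, hSv, hScard⟩ := hv T hTT₀
  exact ⟨S.map (↑), Multiset.map_le_map hST, hSv, by simpa using hScard⟩

theorem stmt0 :
    ∃ f : ℕ → ℕ → ℕ, ∀ (d Δ n : ℕ) (T : Fin n → Multiset (Fin d → ℤ)),
      (∀ i, ∀ τ ∈ T i, ∀ j, 0 ≤ τ j ∧ |τ j| ≤ (Δ : ℤ)) →
      (∀ i i', (T i).sum = (T i').sum) →
      (∀ i, (T i).sum ≠ 0) →
      ∃ S : Fin n → Multiset (Fin d → ℤ),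
        (∀ i, S i ≤ T i ∧ S i ≠ 0 ∧ Multiset.card (S i) ≤ f d Δ) ∧
        (∀ i i', (S i).sum = (S i').sum) := by
  classical
  choose f hf using fun d Δ : ℕ => exists_bound_common_subsum
    ((Set.finite_Icc (0 : Fin d → ℤ) Δ).sdiff (t := {0})) fun τ hτ => ⟨hτ.1.1, hτ.2⟩
  refine ⟨f, fun d Δ n T hbound hsum hne => ?_⟩
  rcases n with _ | n
  · exact ⟨fun _ => 0, finZeroElim, finZeroElim⟩
  set T' := fun i => (T i).filter (· ≠ 0)
  have hT'sum (i) : (T' i).sum = (T i).sum := Multiset.sum_filter_ne_zero _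
  have hT'mem (i) : ∀ τ ∈ T' i, τ ∈ Set.Icc (0 : Fin d → ℤ) Δ \ {0} := by
    intro τ hτ
    obtain ⟨hτT, hτ0⟩ := Multiset.mem_filter.1 hτ
    refine ⟨⟨fun j => (hbound i τ hτT j).1, fun j => ?_⟩, hτ0⟩
    have := hbound i τ hτT j
    simpa [abs_of_nonneg this.1] using this.2
  obtain ⟨v, hv0, hv⟩ := hf d Δ (T' 0) (hT'mem 0) (by rw [hT'sum]; exact hne 0)
  choose S hST hSv hScard using fun i => hv (T' i) (hT'mem i) (by rw [hT'sum, hT'sum, hsum])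
  refine ⟨S, fun i => ⟨(hST i).trans (Multiset.filter_le _ _), ?_, hScard i⟩,
    fun i i' => (hSv i).trans (hSv i').symm⟩
  intro h
  exact hv0 (by rw [← hSv i, h, Multiset.sum_zero])
end

section
/- For every integer matrix A with m columns, every element g of the Graver basis of A satisfies ‖g‖_∞ ≤ (2m‖A‖_∞ + 1)^m, where the Graver basis consists of the ⊑-minimal nonzero integer vectors in the kernel of A. -/
/-!
Flipping the signs of the columns of `A` on which `g` is negative moves `g` into the
nonnegative orthant without changing `‖A‖_∞` or the minimality of `g`. There `g` is a
positive combination `∑ cᵢ zᵢ` of at most `m` nonnegative integer kernel vectors `zᵢ`, each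
bounded by `(m ‖A‖_∞)^(m-1)`: Siegel's lemma, applied to independent rows of `A` restricted
to the support of a nonnegative kernel vector `x`, yields a small integer kernel vector `w`
supported in that of `x`, and subtracting the largest multiple of `w` that keeps `x`
nonnegative shrinks the support (Carathéodory-style peeling). If some `cᵢ ≥ 1` then `zᵢ ≤ g`,
so `zᵢ = g` by minimality; otherwise `g ≤ ∑ zᵢ ≤ m (m ‖A‖_∞)^(m-1) ≤ (2m ‖A‖_∞ + 1)^m`.
For `A = 0` the minimal `g` is a unit vector.
-/

def ConformalZ {n : ℕ} (x y : Fin n → ℤ) : Prop :=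
  ∀ j, 0 ≤ x j * y j ∧ |x j| ≤ |y j|

def maxEnt {k m : ℕ} (A : Matrix (Fin k) (Fin m) ℤ) : ℕ :=
  Finset.univ.sup fun i => Finset.univ.sup fun j => (A i j).natAbs

open Matrix Function

universe u

theorem exists_pos_sub_smul_nonneg_support_ssubset {ι 𝕜 : Type*} [Fintype ι] [Field 𝕜]
    [LinearOrder 𝕜] [IsStrictOrderedRing 𝕜] {c w : ι → 𝕜} (hc : 0 ≤ c)
    (hw : ∃ j, 0 < w j) (hwc : support w ⊆ support c) :
    ∃ μ : 𝕜, 0 < μ ∧ 0 ≤ c - μ • w ∧ support (c - μ • w) ⊂ support c := by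
  classical
  obtain ⟨j₀, hj₀, hmin⟩ := (Finset.univ.filter fun j => 0 < w j).exists_min_image
    (fun j => c j / w j) (by simpa [Finset.Nonempty] using hw)
  simp only [Finset.mem_filter, Finset.mem_univ, true_and] at hj₀ hmin
  have hc₀ : 0 < c j₀ := (hc j₀).lt_of_ne' (hwc hj₀.ne')
  refine ⟨c j₀ / w j₀, div_pos hc₀ hj₀, fun j => ?_, ?_⟩
  · rw [Pi.zero_apply, Pi.sub_apply, Pi.smul_apply, smul_eq_mul, sub_nonneg]
    rcases lt_or_ge 0 (w j) with hj | hj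
    · exact (le_div_iff₀ hj).1 (hmin j hj)
    · exact (mul_nonpos_of_nonneg_of_nonpos (div_pos hc₀ hj₀).le hj).trans (hc j)
  · refine Set.ssubset_iff_of_subset (fun j hj => ?_) |>.2 ⟨j₀, hc₀.ne', ?_⟩
    · by_contra hcj
      have hwj : w j = 0 := not_not.1 fun h => hcj (hwc h)
      simp_all
    · simp [div_mul_cancel₀ _ hj₀.ne']

theorem mulVec_intCast_eq_zero_iff {κ ι : Type*} [Fintype ι] (A : Matrix κ ι ℤ) (z : ι → ℤ) :
    A.map ((↑) : ℤ → ℚ) *ᵥ (fun j => (z j : ℚ)) = 0 ↔ A *ᵥ z = 0 := by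
  simp only [funext_iff, Pi.zero_apply]
  refine forall_congr' fun i => ?_
  rw [← Int.cast_eq_zero (α := ℚ), ← eq_intCast (Int.castRingHom ℚ), RingHom.map_mulVec]
  rfl

theorem mulVec_sub_smul_intCast_eq_zero {κ ι : Type*} [Fintype ι] (A : Matrix κ ι ℤ)
    {x : ι → ℚ} (hx : A.map ((↑) : ℤ → ℚ) *ᵥ x = 0) {w : ι → ℤ} (hw : A *ᵥ w = 0) (μ : ℚ) :
    A.map ((↑) : ℤ → ℚ) *ᵥ (x - μ • fun j => (w j : ℚ)) = 0 := by
  rw [mulVec_sub, mulVec_smul, hx, (mulVec_intCast_eq_zero_iff A w).2 hw, smul_zero, sub_zero]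

theorem mulVec_eq_submatrix_mulVec_of_support_subset {κ ι R : Type*} [Fintype ι]
    [NonUnitalNonAssocSemiring R] (M : Matrix κ ι R) {s : Set ι} [Fintype s] {v : ι → R}
    (hv : support v ⊆ s) : M *ᵥ v = M.submatrix id ((↑) : s → ι) *ᵥ (v ∘ (↑)) := by
  classical
  ext i
  simp only [mulVec, dotProduct, submatrix_apply, id, Function.comp_apply]
  rw [← Finset.sum_subset (Finset.subset_univ s.toFinset) fun j _ hj => ?_]
  · exact Finset.sum_subtype _ (by simp) _
  · rw [notMem_support.1 fun h => hj (Set.mem_toFinset.2 (hv h)), mul_zero]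

theorem rpow_div_sub_le_pow {X : ℝ} (hX : 1 ≤ X) {r n : ℕ} (hrn : r < n) :
    X ^ ((r : ℝ) / (n - r)) ≤ X ^ (n - 1) := by
  have hrn' : (r : ℝ) + 1 ≤ n := by exact_mod_cast hrn
  rw [← Real.rpow_natCast, Nat.cast_sub (by omega), Nat.cast_one]
  refine Real.rpow_le_rpow_of_exponent_le hX ?_
  calc (r : ℝ) / (n - r) ≤ r := div_le_self (Nat.cast_nonneg r) (by linarith)
    _ ≤ n - 1 := by linarith

theorem exists_submatrix_card_lt_of_mulVec_eq_zero {κ : Type u} {ι : Type*} [Fintype κ]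
    [Fintype ι] (B : Matrix κ ι ℤ) {y : ι → ℚ} (hy : y ≠ 0)
    (hker : B.map ((↑) : ℤ → ℚ) *ᵥ y = 0) :
    ∃ (ρ : Type u) (_ : Fintype ρ) (sel : ρ → κ), Fintype.card ρ < Fintype.card ι ∧
      ∀ w : ι → ℤ, B.submatrix sel id *ᵥ w = 0 → B *ᵥ w = 0 := by
  classical
  set Bq := B.map ((↑) : ℤ → ℚ)
  obtain ⟨ρ, sel, hsel, hspan, hli⟩ := exists_linearIndependent' ℚ Bq.row
  have : Finite ρ := Finite.of_injective sel hsel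
  let _ : Fintype ρ := Fintype.ofFinite ρ
  refine ⟨ρ, inferInstance, sel, ?_, fun w hw => ?_⟩
  · have hrank : (Bq.submatrix sel id).rank = Fintype.card ρ := hli.rank_matrix
    have hy' : y ∈ LinearMap.ker (Bq.submatrix sel id).mulVecLin := by
      ext i
      exact congrFun hker (sel i)
    have hpos : 0 < Module.finrank ℚ (LinearMap.ker (Bq.submatrix sel id).mulVecLin) :=
      Module.finrank_pos_iff_exists_ne_zero.2 ⟨⟨y, hy'⟩, by simpa using hy⟩
    have := (Bq.submatrix sel id).mulVecLin.finrank_range_add_finrank_ker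
    rw [Module.finrank_fintype_fun_eq_card, ← Matrix.rank, hrank] at this
    omega
  · rw [← mulVec_intCast_eq_zero_iff] at hw ⊢
    have hrows : Submodule.span ℚ (Set.range Bq.row) ≤
        LinearMap.ker (dotProductEquiv ℚ ι (fun j => (w j : ℚ))) := by
      rw [← hspan, Submodule.span_le]
      rintro _ ⟨i, rfl⟩
      exact (dotProduct_comm _ _).trans (congrFun hw i)
    ext i
    exact (dotProduct_comm _ _).trans (hrows (Submodule.subset_span ⟨i, rfl⟩))

section Siegel

attribute [local instance] Matrix.seminormedAddCommGroup

theorem exists_ne_zero_int_mulVec_eq_zero_abs_le {κ ι : Type*} [Fintype κ] [Fintype ι]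
    (B : Matrix κ ι ℤ) {a : ℕ} (hB : ∀ i j, |B i j| ≤ a) {y : ι → ℚ} (hy : y ≠ 0)
    (hker : B.map ((↑) : ℤ → ℚ) *ᵥ y = 0) :
    ∃ w : ι → ℤ, w ≠ 0 ∧ B *ᵥ w = 0 ∧
      ∀ j, |w j| ≤ ((Fintype.card ι * max 1 a) ^ (Fintype.card ι - 1) : ℕ) := by
  classical
  obtain ⟨j₀, -⟩ := Function.ne_iff.1 hy
  have hn : 1 ≤ Fintype.card ι := Fintype.card_pos_iff.2 ⟨j₀⟩
  obtain ⟨ρ, _, sel, hcard, hsub⟩ := exists_submatrix_card_lt_of_mulVec_eq_zero B hy hker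
  rcases (Fintype.card ρ).eq_zero_or_pos with hρ | hρ
  · have : IsEmpty ρ := Fintype.card_eq_zero_iff.1 hρ
    refine ⟨Pi.single j₀ 1, by simp, hsub _ (funext isEmptyElim), fun j => ?_⟩
    have h1 : |(Pi.single j₀ 1 : ι → ℤ) j| ≤ 1 := by
      rcases eq_or_ne j j₀ with rfl | h <;> simp [*]
    exact h1.trans (by exact_mod_cast Nat.one_le_pow _ _ (one_le_mul hn (le_max_left 1 a)))
  obtain ⟨t, ht0, htker, htnorm⟩ :=
    Int.Matrix.exists_ne_zero_int_vec_norm_le (B.submatrix sel id) hcard hρ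
  refine ⟨t, ht0, hsub t htker, fun j => ?_⟩
  have hnorm : ‖B.submatrix sel id‖ ≤ a := (norm_le_iff (Nat.cast_nonneg a)).2 fun i j => by
    rw [Int.norm_eq_abs]
    exact_mod_cast hB (sel i) j
  have hX : (1 : ℝ) ≤ Fintype.card ι * max 1 ‖B.submatrix sel id‖ :=
    one_le_mul_of_one_le_of_one_le (by exact_mod_cast hn) (le_max_left _ _)
  suffices (|t j| : ℝ) ≤ ((Fintype.card ι * max 1 a) ^ (Fintype.card ι - 1) : ℕ) by
    exact_mod_cast this
  calc (|t j| : ℝ) = ‖t j‖ := by simp [Int.norm_eq_abs]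
    _ ≤ ‖t‖ := norm_le_pi_norm t j
    _ ≤ _ := htnorm
    _ ≤ (Fintype.card ι * max 1 ‖B.submatrix sel id‖) ^ (Fintype.card ι - 1) :=
      rpow_div_sub_le_pow hX hcard
    _ ≤ _ := by push_cast; gcongr

end Siegel

section NonnegativeKernel

variable {κ ι : Type*} [Fintype κ] [Fintype ι]

theorem exists_int_mulVec_eq_zero_support_subset (A : Matrix κ ι ℤ) {a : ℕ}
    (hA : ∀ i j, |A i j| ≤ a) {x : ι → ℚ} (hx : x ≠ 0)
    (hker : A.map ((↑) : ℤ → ℚ) *ᵥ x = 0) :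
    ∃ w : ι → ℤ, (∃ j, 0 < w j) ∧ A *ᵥ w = 0 ∧ support w ⊆ support x ∧
      ∀ j, |w j| ≤ ((Fintype.card ι * max 1 a) ^ (Fintype.card ι - 1) : ℕ) := by
  classical
  set S := support x
  obtain ⟨w', hw'0, hw'ker, hw'C⟩ := exists_ne_zero_int_mulVec_eq_zero_abs_le
    (A.submatrix id ((↑) : S → ι)) (fun i j => hA i j) (y := x ∘ (↑))
    (fun h => hx (funext fun j => by_contra fun hj => hj (congrFun h ⟨j, hj⟩)))
    (by rw [← submatrix_map, ← mulVec_eq_submatrix_mulVec_of_support_subset _ subset_rfl, hker])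
  wlog hpos : ∃ j, 0 < w' j generalizing w'
  · obtain ⟨j, hj⟩ := Function.ne_iff.1 hw'0
    push Not at hpos
    exact this (-w') (neg_ne_zero.2 hw'0) (by rw [mulVec_neg, hw'ker, neg_zero])
      (by simpa using hw'C) ⟨j, neg_pos.2 ((hpos j).lt_of_ne hj)⟩
  set w : ι → ℤ := fun j => if h : j ∈ S then w' ⟨j, h⟩ else 0
  have hw'w : w ∘ (↑) = w' := funext fun j => dif_pos j.2
  have hwS : support w ⊆ S := fun j hj => by_contra fun h => hj (dif_neg h)
  obtain ⟨j₀, hj₀⟩ := hpos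
  refine ⟨w, ⟨j₀, by simpa [w] using hj₀⟩, ?_, hwS, fun j => ?_⟩
  · rw [mulVec_eq_submatrix_mulVec_of_support_subset _ hwS, hw'w, hw'ker]
  by_cases hj : j ∈ S
  · have hn : 1 ≤ Fintype.card ι := Fintype.card_pos_iff.2 ⟨j⟩
    have hSι : Fintype.card S ≤ Fintype.card ι := Fintype.card_subtype_le _
    simp only [w, dif_pos hj]
    refine (hw'C ⟨j, hj⟩).trans (Nat.cast_le.2 ?_)
    calc (Fintype.card S * max 1 a) ^ (Fintype.card S - 1)
        ≤ (Fintype.card ι * max 1 a) ^ (Fintype.card S - 1) := by gcongr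
      _ ≤ _ := Nat.pow_le_pow_right (one_le_mul hn (le_max_left 1 a)) (by omega)
  · simp [w, hj]

theorem exists_nonneg_int_mulVec_eq_zero_support_subset (A : Matrix κ ι ℤ) {a : ℕ}
    (hA : ∀ i j, |A i j| ≤ a) {x : ι → ℚ} (hx0 : 0 ≤ x) (hx : x ≠ 0)
    (hker : A.map ((↑) : ℤ → ℚ) *ᵥ x = 0) :
    ∃ z : ι → ℤ, 0 ≤ z ∧ z ≠ 0 ∧ A *ᵥ z = 0 ∧ support z ⊆ support x ∧
      ∀ j, z j ≤ ((Fintype.card ι * max 1 a) ^ (Fintype.card ι - 1) : ℕ) := by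
  obtain ⟨w, ⟨j₁, hj₁⟩, hwker, hwx, hwC⟩ :=
    exists_int_mulVec_eq_zero_support_subset A hA hx hker
  obtain ⟨μ, hμ, hnonneg, hssub⟩ := exists_pos_sub_smul_nonneg_support_ssubset hx0
    (w := fun j => (w j : ℚ)) ⟨j₁, by exact_mod_cast hj₁⟩ (by simpa using hwx)
  by_cases hx' : x - μ • (fun j => (w j : ℚ)) = 0
  · refine ⟨w, fun j => ?_, fun h => hj₁.ne' (congrFun h j₁), hwker, hwx,
      fun j => (le_abs_self _).trans (hwC j)⟩
    have hxj : x j = μ * w j := by simpa [sub_eq_zero] using congrFun hx' j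
    exact_mod_cast (mul_nonneg_iff_of_pos_left hμ).1 (hxj ▸ hx0 j)
  · obtain ⟨z, hz0, hz, hzker, hzx, hzC⟩ := exists_nonneg_int_mulVec_eq_zero_support_subset A hA
      hnonneg hx' (mulVec_sub_smul_intCast_eq_zero A hker hwker μ)
    exact ⟨z, hz0, hz, hzker, hzx.trans hssub.subset, hzC⟩
termination_by (support x).ncard
decreasing_by exact Set.ncard_lt_ncard hssub

theorem exists_nonneg_int_decomposition (A : Matrix κ ι ℤ) {a : ℕ}
    (hA : ∀ i j, |A i j| ≤ a) {x : ι → ℚ} (hx0 : 0 ≤ x)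
    (hker : A.map ((↑) : ℤ → ℚ) *ᵥ x = 0) :
    ∃ (t : ℕ) (c : Fin t → ℚ) (z : Fin t → ι → ℤ), t ≤ (support x).ncard ∧ (∀ i, 0 < c i) ∧
      (∀ i, 0 ≤ z i ∧ z i ≠ 0 ∧ A *ᵥ z i = 0 ∧
        ∀ j, z i j ≤ ((Fintype.card ι * max 1 a) ^ (Fintype.card ι - 1) : ℕ)) ∧
      ∀ j, x j = ∑ i, c i * z i j := by
  by_cases hx : x = 0
  · exact ⟨0, Fin.elim0, Fin.elim0, Nat.zero_le _, nofun, nofun, by simp [hx]⟩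
  obtain ⟨z, hz0, hz, hzker, hzx, hzC⟩ :=
    exists_nonneg_int_mulVec_eq_zero_support_subset A hA hx0 hx hker
  obtain ⟨j₀, hj₀⟩ := (Pi.lt_def.1 (hz0.lt_of_ne' hz)).2
  obtain ⟨μ, hμ, hnonneg, hssub⟩ := exists_pos_sub_smul_nonneg_support_ssubset hx0
    (w := fun j => (z j : ℚ)) ⟨j₀, by exact_mod_cast hj₀⟩ (by simpa using hzx)
  obtain ⟨t, c, zs, ht, hc, hzs, hsum⟩ := exists_nonneg_int_decomposition A hA hnonneg
    (mulVec_sub_smul_intCast_eq_zero A hker hzker μ)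
  refine ⟨t + 1, Fin.cons μ c, Fin.cons z zs, ?_, Fin.cases hμ hc,
    Fin.cases ⟨hz0, hz, hzker, hzC⟩ hzs, fun j => ?_⟩
  · have := Set.ncard_lt_ncard hssub
    omega
  · rw [Fin.sum_univ_succ, Fin.cons_zero, Fin.cons_zero]
    simp only [Fin.cons_succ, ← hsum j, Pi.sub_apply, Pi.smul_apply, smul_eq_mul]
    ring
termination_by (support x).ncard
decreasing_by exact Set.ncard_lt_ncard hssub

theorem mul_pow_pred_le {n a : ℕ} (ha : 1 ≤ a) :
    n * (n * max 1 a) ^ (n - 1) ≤ (2 * n * a + 1) ^ n := by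
  rw [max_eq_right ha]
  rcases n with _ | n
  · simp
  rw [pow_succ' _ n, Nat.add_sub_cancel]
  gcongr <;> nlinarith

theorem nonneg_minimal_kernel_vec_le (A : Matrix κ ι ℤ) {a : ℕ} (hA : ∀ i j, |A i j| ≤ a)
    {g : ι → ℤ} (hg : 0 ≤ g) (hg0 : g ≠ 0) (hker : A *ᵥ g = 0)
    (hmin : ∀ z, 0 ≤ z → z ≤ g → z ≠ 0 → A *ᵥ z = 0 → z = g) (j : ι) :
    g j ≤ ((2 * Fintype.card ι * a + 1) ^ Fintype.card ι : ℕ) := by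
  classical
  rcases Nat.eq_zero_or_pos a with rfl | ha
  · obtain ⟨j₀, hj₀⟩ := (Pi.lt_def.1 (hg.lt_of_ne' hg0)).2
    have hA0 : A = 0 := by ext i j; simpa using hA i j
    have hsingle : Pi.single j₀ 1 ≤ g := fun j => by
      rcases eq_or_ne j j₀ with rfl | h
      · simpa using Order.one_le_iff_pos.2 hj₀
      · simpa [h] using hg j
    rw [← hmin _ (Pi.single_nonneg.2 zero_le_one) hsingle (by simp) (by rw [hA0, zero_mulVec])]
    rcases eq_or_ne j j₀ with rfl | h <;> simp [*]
  obtain ⟨t, c, z, ht, hc, hz, hsum⟩ := exists_nonneg_int_decomposition A hA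
    (x := fun j => (g j : ℚ)) (fun j => Int.cast_nonneg (hg j))
    (by rwa [mulVec_intCast_eq_zero_iff])
  set n := Fintype.card ι
  set C := (n * max 1 a) ^ (n - 1)
  have hn : 1 ≤ n := Fintype.card_pos_iff.2 ⟨j⟩
  have hz0 : ∀ i j, (0 : ℚ) ≤ z i j := fun i j => by exact_mod_cast (hz i).1 j
  have hzC : ∀ i j, (z i j : ℚ) ≤ C := fun i j => by exact_mod_cast (hz i).2.2.2 j
  suffices (g j : ℚ) ≤ n * C by
    have hgC : g j ≤ (n * C : ℕ) := by exact_mod_cast this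
    exact hgC.trans (Nat.cast_le.2 (mul_pow_pred_le ha))
  by_cases hbig : ∃ i, 1 ≤ c i
  · obtain ⟨i, hi⟩ := hbig
    have hzg : z i ≤ g := fun j => by
      have : (z i j : ℚ) ≤ g j := calc
        (z i j : ℚ) ≤ c i * z i j := le_mul_of_one_le_left (hz0 i j) hi
        _ ≤ ∑ i, c i * z i j := Finset.single_le_sum
          (fun i _ => mul_nonneg (hc i).le (hz0 i j)) (Finset.mem_univ i)
        _ = g j := (hsum j).symm
      exact_mod_cast this
    rw [← hmin _ (hz i).1 hzg (hz i).2.1 (hz i).2.2.1]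
    exact (hzC i j).trans (le_mul_of_one_le_left (Nat.cast_nonneg C) (by exact_mod_cast hn))
  · push Not at hbig
    have ht' : t ≤ n := (ht.trans (Set.ncard_le_card _)).trans_eq Nat.card_eq_fintype_card
    calc (g j : ℚ) = ∑ i, c i * z i j := hsum j
      _ ≤ ∑ i, (z i j : ℚ) := Finset.sum_le_sum fun i _ =>
        mul_le_of_le_one_left (hz0 i j) (hbig i).le
      _ ≤ ∑ _i : Fin t, (C : ℚ) := Finset.sum_le_sum fun i _ => hzC i j
      _ = t * C := by simp
      _ ≤ n * C := by gcongr

end NonnegativeKernel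

theorem exists_sign_change_abs_minimal {k m : ℕ} (A : Matrix (Fin k) (Fin m) ℤ) (g : Fin m → ℤ)
    (hker : A *ᵥ g = 0)
    (hmin : ∀ z : Fin m → ℤ, z ≠ 0 → A *ᵥ z = 0 → ConformalZ z g → z = g) :
    ∃ A' : Matrix (Fin k) (Fin m) ℤ, (∀ i j, |A' i j| = |A i j|) ∧ A' *ᵥ |g| = 0 ∧
      ∀ z, 0 ≤ z → z ≤ |g| → z ≠ 0 → A' *ᵥ z = 0 → z = |g| := by
  set σ : Fin m → ℤ := fun j => if 0 ≤ g j then 1 else -1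
  have hσσ : σ * σ = 1 := by
    funext j
    simp only [σ, Pi.mul_apply, Pi.one_apply]
    split_ifs <;> simp
  have hσg : σ * g = |g| := by
    funext j
    simp only [σ, Pi.mul_apply, Pi.abs_apply]
    split_ifs with h
    · rw [one_mul, abs_of_nonneg h]
    · rw [neg_one_mul, abs_of_neg (not_le.1 h)]
  have hmul : ∀ v, (A * diagonal σ) *ᵥ v = A *ᵥ (σ * v) := fun v => by
    rw [← mulVec_mulVec]
    congr 1
    funext j
    exact mulVec_diagonal σ v j
  refine ⟨A * diagonal σ, fun i j => ?_, ?_, fun z hz0 hzg hz hzker => ?_⟩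
  · rw [mul_diagonal, abs_mul]
    simp only [σ]
    split_ifs <;> simp
  · rw [hmul, ← hσg, ← mul_assoc, hσσ, one_mul, hker]
  · have hconf : ConformalZ (σ * z) g := fun j => by
      have hj := congrFun hσg j
      have hσj : |σ j| = 1 := by simp only [σ]; split_ifs <;> simp
      simp only [Pi.mul_apply, Pi.abs_apply] at hj ⊢
      refine ⟨?_, ?_⟩
      · rw [mul_comm (σ j), mul_assoc, hj]
        exact mul_nonneg (hz0 j) (abs_nonneg _)
      · rw [abs_mul, hσj, one_mul, abs_of_nonneg (hz0 j)]
        exact hzg j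
    have hσz : σ * z ≠ 0 := fun h => hz (by rw [← one_mul z, ← hσσ, mul_assoc, h, mul_zero])
    rw [← hσg, ← hmin _ hσz (by rw [← hmul, hzker]) hconf, ← mul_assoc, hσσ, one_mul]

theorem abs_le_maxEnt {k m : ℕ} (A : Matrix (Fin k) (Fin m) ℤ) (i : Fin k) (j : Fin m) :
    |A i j| ≤ maxEnt A := by
  rw [Int.abs_eq_natAbs, Nat.cast_le]
  exact (Finset.le_sup (f := fun j => (A i j).natAbs) (Finset.mem_univ j)).trans
    (Finset.le_sup (f := fun i => Finset.univ.sup fun j => (A i j).natAbs) (Finset.mem_univ i))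

theorem stmt1 {k m : ℕ} (A : Matrix (Fin k) (Fin m) ℤ) (g : Fin m → ℤ)
    (hg0 : g ≠ 0) (hker : A.mulVec g = 0)
    (hmin : ∀ z : Fin m → ℤ, z ≠ 0 → A.mulVec z = 0 → ConformalZ z g → z = g) :
    ∀ j, (g j).natAbs ≤ (2 * m * maxEnt A + 1) ^ m := by
  intro j
  obtain ⟨A', hA', hker', hmin'⟩ := exists_sign_change_abs_minimal A g hker hmin
  have hg0' : |g| ≠ 0 := fun h => hg0 (funext fun j => abs_eq_zero.1 (congrFun h j))
  have hbound := nonneg_minimal_kernel_vec_le A'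
    (fun i j => (hA' i j).trans_le (abs_le_maxEnt A i j)) (abs_nonneg g) hg0' hker' hmin' j
  rw [Pi.abs_apply, Fintype.card_fin] at hbound
  zify
  exact_mod_cast hbound
end

section
/- Let A be an integer matrix and let y ∈ ker(A) ∩ Z^n be nonzero. Then there exists a finite multiset G of Graver basis elements of A, all sign-compatible with y (i.e. g ⊑ y for each g ∈ G), such that y = Σ_{g∈G} g. -/
def IsGraver {k n : ℕ} (A : Matrix (Fin k) (Fin n) ℤ) (v : Fin n → ℤ) : Prop :=
  v ≠ 0 ∧ A.mulVec v = 0 ∧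
    ∀ z : Fin n → ℤ, z ≠ 0 → A.mulVec z = 0 → ConformalZ z v → z = v

lemma abs_natAbs_le {a b : ℤ} : |a| ≤ |b| ↔ a.natAbs ≤ b.natAbs := by
  rw [Int.abs_eq_natAbs, Int.abs_eq_natAbs]
  exact_mod_cast Iff.rfl

lemma conf_sub {a b : ℤ} (h1 : 0 ≤ a * b) (h2 : |a| ≤ |b|) :
    0 ≤ (b - a) * b ∧ |b - a| ≤ |b| ∧ a.natAbs + (b - a).natAbs = b.natAbs := by
  rw [mul_nonneg_iff] at h1
  rw [abs_natAbs_le] at h2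
  rw [abs_natAbs_le]
  rcases h1 with ⟨ha, hb⟩ | ⟨ha, hb⟩
  · refine ⟨mul_nonneg (by omega) hb, by omega, by omega⟩
  · refine ⟨mul_nonneg_iff.mpr (Or.inr ⟨by omega, hb⟩), by omega, by omega⟩

lemma conf_trans {a b c : ℤ} (h1 : 0 ≤ a * b) (h2 : |a| ≤ |b|)
    (h3 : 0 ≤ b * c) (h4 : |b| ≤ |c|) : 0 ≤ a * c ∧ |a| ≤ |c| := by
  rw [mul_nonneg_iff] at h1 h3
  rw [abs_natAbs_le] at h2 h4
  rw [abs_natAbs_le]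
  constructor
  · rcases h1 with ⟨ha, hb⟩ | ⟨ha, hb⟩ <;> rcases h3 with ⟨hb', hc⟩ | ⟨hb', hc⟩
    · exact mul_nonneg ha hc
    · have : a = 0 := by omega
      simp [this]
    · have : a = 0 := by omega
      simp [this]
    · exact mul_nonneg_iff.mpr (Or.inr ⟨ha, hc⟩)
  · omega

theorem stmt2 {k n : ℕ} (A : Matrix (Fin k) (Fin n) ℤ) (y : Fin n → ℤ)
    (hy0 : y ≠ 0) (hker : A.mulVec y = 0) :
    ∃ G : Multiset (Fin n → ℤ),
      (∀ g ∈ G, IsGraver A g ∧ ConformalZ g y) ∧ G.sum = y := by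
  have key : ∀ N : ℕ, ∀ y : Fin n → ℤ, (∑ j, (y j).natAbs) ≤ N → y ≠ 0 →
      A.mulVec y = 0 →
      ∃ G : Multiset (Fin n → ℤ),
        (∀ g ∈ G, IsGraver A g ∧ ConformalZ g y) ∧ G.sum = y := by
    intro N
    induction N with
    | zero =>
      intro y hN hy0 hker
      exfalso
      apply hy0
      funext j
      have : (y j).natAbs = 0 := by
        have := Finset.sum_eq_zero_iff.mp (Nat.le_zero.mp hN) j (Finset.mem_univ j)
        exact this
      simpa using Int.natAbs_eq_zero.mp this
    | succ N ih =>
      intro y hN hy0 hker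
      by_cases hmin : ∀ z : Fin n → ℤ, z ≠ 0 → A.mulVec z = 0 → ConformalZ z y → z = y
      · refine ⟨{y}, ?_, by simp⟩
        intro g hg
        rw [Multiset.mem_singleton] at hg
        subst hg
        exact ⟨⟨hy0, hker, hmin⟩, fun j => ⟨mul_self_nonneg _, le_rfl⟩⟩
      · push_neg at hmin
        obtain ⟨z, hz0, hzker, hzy, hzne⟩ := hmin
        set w := y - z with hw
        have hw0 : w ≠ 0 := fun h => hzne (sub_eq_zero.mp h).symm
        have hwker : A.mulVec w = 0 := by
          rw [hw, Matrix.mulVec_sub, hker, hzker, sub_zero]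
        have hwy : ConformalZ w y := by
          intro j
          obtain ⟨h1, h2⟩ := hzy j
          exact ⟨(conf_sub h1 h2).1, (conf_sub h1 h2).2.1⟩
        have hsum : ∑ j, (z j).natAbs + ∑ j, (w j).natAbs = ∑ j, (y j).natAbs := by
          rw [← Finset.sum_add_distrib]
          refine Finset.sum_congr rfl fun j _ => ?_
          obtain ⟨h1, h2⟩ := hzy j
          simpa [hw] using (conf_sub h1 h2).2.2
        have hzpos : 0 < ∑ j, (z j).natAbs := by
          rcases Nat.eq_zero_or_pos (∑ j, (z j).natAbs) with h | h
          · exfalso; apply hz0; funext j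
            have := Finset.sum_eq_zero_iff.mp h j (Finset.mem_univ j)
            simpa using Int.natAbs_eq_zero.mp this
          · exact h
        have hwpos : 0 < ∑ j, (w j).natAbs := by
          rcases Nat.eq_zero_or_pos (∑ j, (w j).natAbs) with h | h
          · exfalso; apply hw0; funext j
            have := Finset.sum_eq_zero_iff.mp h j (Finset.mem_univ j)
            simpa using Int.natAbs_eq_zero.mp this
          · exact h
        obtain ⟨Gz, hGz, hGzsum⟩ := ih z (by omega) hz0 hzker
        obtain ⟨Gw, hGw, hGwsum⟩ := ih w (by omega) hw0 hwker
        refine ⟨Gz + Gw, ?_, by rw [Multiset.sum_add, hGzsum, hGwsum, hw]; abel⟩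
        intro g hg
        rcases Multiset.mem_add.mp hg with hg | hg
        · obtain ⟨hgr, hgz⟩ := hGz g hg
          refine ⟨hgr, fun j => ?_⟩
          obtain ⟨h1, h2⟩ := hgz j
          obtain ⟨h3, h4⟩ := hzy j
          exact conf_trans h1 h2 h3 h4
        · obtain ⟨hgr, hgw⟩ := hGw g hg
          refine ⟨hgr, fun j => ?_⟩
          obtain ⟨h1, h2⟩ := hgw j
          obtain ⟨h3, h4⟩ := hwy j
          exact conf_trans h1 h2 h3 h4
  exact key _ y le_rfl hy0 hker
end

section
/- Let P = (A, b) define the polyhedron of solutions {x : Ax = b, x ≥ 0}. Suppose ρ ≥ 0 satisfies: for every fractional solution x^frac ∈ Sol^R(P) and every integral solution x^int ∈ Sol^Z(P), there exists an integral solution x̃^int ∈ Sol^Z(P) with ‖x̃^int − x^frac‖_∞ ≤ ρ and x̃^int − x^frac ⊑ x^int − x^frac. Then for every optimal fractional solution x^frac of min{c^T x : x ∈ Sol^R(P)} with Sol^Z(P) nonempty and the integer optimum attained, there exists an optimal integral solution x^int with ‖x^int − x^frac‖_∞ ≤ ρ. -/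
def ConformalR {n : ℕ} (x y : Fin n → ℝ) : Prop :=
  ∀ j, 0 ≤ x j * y j ∧ |x j| ≤ |y j|

def IsIntVec {n : ℕ} (x : Fin n → ℝ) : Prop := ∀ j, ∃ z : ℤ, x j = z

theorem stmt13 {k n : ℕ} (A : Matrix (Fin k) (Fin n) ℝ) (b : Fin k → ℝ)
    (c : Fin n → ℝ) (ρ : ℝ)
    (SolR SolZ : Set (Fin n → ℝ))
    (hSolR : SolR = {x | A.mulVec x = b ∧ ∀ j, 0 ≤ x j})
    (hSolZ : SolZ = {x ∈ SolR | IsIntVec x})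
    (hρ : 0 ≤ ρ)
    (hprox : ∀ xf ∈ SolR, ∀ xi ∈ SolZ, ∃ xt ∈ SolZ,
      (∀ j, |xt j - xf j| ≤ ρ) ∧ ConformalR (xt - xf) (xi - xf))
    (xfrac : Fin n → ℝ) (hxf : xfrac ∈ SolR)
    (hxfopt : ∀ x ∈ SolR, ∑ j, c j * xfrac j ≤ ∑ j, c j * x j)
    (hZopt : ∃ xs ∈ SolZ, ∀ x ∈ SolZ, ∑ j, c j * xs j ≤ ∑ j, c j * x j) :
    ∃ xint ∈ SolZ, (∀ x ∈ SolZ, ∑ j, c j * xint j ≤ ∑ j, c j * x j) ∧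
      ∀ j, |xint j - xfrac j| ≤ ρ := by
  obtain ⟨xs, hxsZ, hxsopt⟩ := hZopt
  obtain ⟨xt, hxtZ, hclose, hconf⟩ := hprox xfrac hxf xs hxsZ
  refine ⟨xt, hxtZ, ?_, hclose⟩
  -- It suffices to show c·xt ≤ c·xs
  have hxtR : xt ∈ SolR := by rw [hSolZ] at hxtZ; exact hxtZ.1
  have hxsR : xs ∈ SolR := by rw [hSolZ] at hxsZ; exact hxsZ.1
  rw [hSolR] at hxf hxtR hxsR
  -- feasibility of y = xs - xt + xfrac
  set y : Fin n → ℝ := xs - xt + xfrac with hy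
  have hyR : y ∈ SolR := by
    rw [hSolR]
    constructor
    · simp [hy, Matrix.mulVec_add, Matrix.mulVec_sub, hxf.1, hxtR.1, hxsR.1]
    · intro j
      have h1 := (hconf j).1
      have h2 := (hconf j).2
      simp only [Pi.sub_apply] at h1 h2
      have hxfj := hxf.2 j
      have hxsj := hxsR.2 j
      simp only [hy, Pi.add_apply, Pi.sub_apply]
      rcases le_or_gt 0 (xs j - xfrac j) with hv | hv
      · have := abs_le.mp (h2.trans_eq (abs_of_nonneg hv))
        linarith [this.2]
      · have hu : xt j - xfrac j ≤ 0 := by nlinarith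
        linarith
  have key := hxfopt y hyR
  have hysum : ∑ j, c j * y j = (∑ j, c j * xs j) - (∑ j, c j * xt j) + ∑ j, c j * xfrac j := by
    simp only [hy, Pi.add_apply, Pi.sub_apply, mul_add, mul_sub]
    rw [Finset.sum_add_distrib, Finset.sum_sub_distrib]
  have hle : ∑ j, c j * xt j ≤ ∑ j, c j * xs j := by
    rw [hysum] at key; linarith
  intro x hx
  exact hle.trans (hxsopt x hx)
end

section
/- Suppose x^frac ∈ Sol^R(P), and let x̃^int ∈ Sol^Z(P) minimize ‖x̃^int − x^frac‖_∞ among integral solutions with x̃^int − x^frac ⊑ x^int − x^frac for a fixed x^int ∈ Sol^Z(P). If there exists a nonzero u ∈ ker(A) ∩ Z^n with u ⊑ x^frac − x̃^int, then x̃^int + u ∈ Sol^Z(P), (x̃^int + u) − x^frac ⊑ x̃^int − x^frac, and ‖(x̃^int + u) − x^frac‖_∞ < ‖x̃^int − x^frac‖_∞ — contradicting minimality. Hence no such u exists. -/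
private lemma key_scalar (a v f : ℝ) (hf : 0 ≤ f) (ht : 0 ≤ a)
    (hs : 0 ≤ v * (f - a)) (ha : |v| ≤ |f - a|) :
    0 ≤ a + v ∧ |a + v - f| ≤ |a - f| ∧ 0 ≤ (a + v - f) * (a - f) := by
  rcases lt_trichotomy v 0 with h | h | h
  · have hfa : f - a ≤ 0 := by nlinarith
    rw [abs_of_neg h, abs_of_nonpos hfa] at ha
    have h1 : f - a ≤ v := by linarith
    refine ⟨by linarith, ?_, mul_nonneg (by linarith) (by linarith)⟩
    rw [abs_of_nonneg (by linarith : (0:ℝ) ≤ a + v - f),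
      abs_of_nonneg (by linarith : (0:ℝ) ≤ a - f)]
    linarith
  · subst h; exact ⟨by simpa using ht, by simp, by simpa using mul_self_nonneg (a - f)⟩
  · have hfa : 0 ≤ f - a := by nlinarith
    rw [abs_of_pos h, abs_of_nonneg hfa] at ha
    refine ⟨by linarith, ?_, mul_nonneg_of_nonpos_of_nonpos (by linarith : a + v - f ≤ 0) (by linarith : a - f ≤ 0)⟩
    rw [abs_of_nonpos (by linarith : a + v - f ≤ 0),
      abs_of_nonpos (by linarith : a - f ≤ 0)]
    linarith

theorem stmt15 {k n : ℕ} (A : Matrix (Fin k) (Fin n) ℝ) (b : Fin k → ℝ)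
    (SolR SolZ : Set (Fin n → ℝ))
    (hSolR : SolR = {x | A.mulVec x = b ∧ ∀ j, 0 ≤ x j})
    (hSolZ : SolZ = {x ∈ SolR | IsIntVec x})
    (xfrac : Fin n → ℝ) (hxf : xfrac ∈ SolR)
    (xt : Fin n → ℝ) (hxt : xt ∈ SolZ)
    (u : Fin n → ℝ) (hu0 : u ≠ 0) (huInt : IsIntVec u)
    (huker : A.mulVec u = 0) (huconf : ConformalR u (xfrac - xt)) :
    (xt + u) ∈ SolZ ∧
    ConformalR ((xt + u) - xfrac) (xt - xfrac) ∧
    (∀ j, |(xt j + u j) - xfrac j| ≤ |xt j - xfrac j|) ∧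
    ‖(xt + u) - xfrac‖ ≤ ‖xt - xfrac‖ := by
  subst hSolR hSolZ
  obtain ⟨⟨hxtA, hxtpos⟩, hxtInt⟩ := hxt
  obtain ⟨hxfA, hxfpos⟩ := hxf
  have key : ∀ j, 0 ≤ xt j + u j ∧ |xt j + u j - xfrac j| ≤ |xt j - xfrac j| ∧
      0 ≤ (xt j + u j - xfrac j) * (xt j - xfrac j) := by
    intro j
    obtain ⟨hs, ha⟩ := huconf j
    simp only [Pi.sub_apply] at hs ha
    exact key_scalar (xt j) (u j) (xfrac j) (hxfpos j) (hxtpos j) hs ha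
  have habs : ∀ j, |(xt j + u j) - xfrac j| ≤ |xt j - xfrac j| := fun j => (key j).2.1
  refine ⟨⟨⟨?_, ?_⟩, ?_⟩, ?_, habs, ?_⟩
  · rw [Matrix.mulVec_add, huker, hxtA, add_zero]
  · intro j
    simpa using (key j).1
  · intro j
    obtain ⟨z, hz⟩ := hxtInt j
    obtain ⟨w, hw⟩ := huInt j
    exact ⟨z + w, by simp [hz, hw]⟩
  · intro j
    simp only [Pi.sub_apply, Pi.add_apply]
    exact ⟨(key j).2.2, (key j).2.1⟩
  · apply (pi_norm_le_iff_of_nonneg (norm_nonneg _)).2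
    intro j
    calc ‖(xt + u - xfrac) j‖ = |(xt j + u j) - xfrac j| := by simp
    _ ≤ |xt j - xfrac j| := habs j
    _ = ‖(xt - xfrac) j‖ := by simp
    _ ≤ ‖xt - xfrac‖ := norm_le_pi_norm _ j
end
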